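/- arXiv:1411.5510 — 5 statements merged into one kernel-verified Lean document; each statement's English description precedes it below -/
import Mathlib

section
/- Fix a,b > 0 and define E(W_n) = n·a·Γ(a+b)Γ(b+n-1)/(Γ(b)Γ(a+b+n) − Γ(a+b)Γ(b+n)). Then E(W_n) → 0 as n → ∞. -/
open Real Filter

/-- Probability that the n-th draw from a GDP(a,b,G₀) forms a new cluster. -/
noncomputable def gdpNewClusterProb (a b : ℝ) (n : ℕ) : ℝ :=
  (n : ℝ) * a * Gamma (a + b) * Gamma (b + n - 1) /
    (Gamma b * Gamma (a + b + n) - Gamma (a + b) * Gamma (b + n))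

/-!
With `r n = Γ(b + n) / Γ(a + b + n)` and `c = Γ(a + b) / Γ(b)`, dividing numerator and denominator
by `Γ(b) Γ(a + b + n)` and using `Γ(b + n) = (b + n - 1) Γ(b + n - 1)` gives
`E(W_n) = a c (n / (b + n - 1)) r n / (1 - c r n)`.
Euler's limit formula `Γ(x) = lim n^x n! / (x (x + 1) ⋯ (x + n))` shows that `r n` behaves like
`(Γ(b) / Γ(a + b)) n^(-a)`, so `r n → 0` and hence `E(W_n) → 0`.
-/

open Topology Finset
open scoped Nat

namespace Real

theorem Gamma_add_nat_eq_mul_prod {x : ℝ} (hx : 0 < x) (n : ℕ) :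
    Gamma (x + n) = Gamma x * ∏ j ∈ range n, (x + j) := by
  induction n with
  | zero => simp
  | succ n ih =>
    rw [Nat.cast_succ, ← add_assoc, Gamma_add_one (by positivity), ih, prod_range_succ]
    ring

theorem GammaSeq_pos {x : ℝ} (hx : 0 < x) {n : ℕ} (hn : n ≠ 0) : 0 < GammaSeq x n := by
  have : 0 < ∏ j ∈ range (n + 1), (x + j) := prod_pos fun j _ => by positivity
  unfold GammaSeq
  positivity

theorem GammaSeq_mul_Gamma_add_nat_succ {x : ℝ} (hx : 0 < x) (n : ℕ) :
    GammaSeq x n * Gamma (x + (n + 1 : ℕ)) = Gamma x * ((n : ℝ) ^ x * n !) := by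
  have : ∏ j ∈ range (n + 1), (x + j) ≠ 0 := (prod_pos fun j _ => by positivity).ne'
  rw [GammaSeq, Gamma_add_nat_eq_mul_prod hx]
  field_simp

theorem tendsto_Gamma_add_nat_div_Gamma_add_nat {x y : ℝ} (hx : 0 < x) (hxy : x < y) :
    Tendsto (fun n : ℕ => Gamma (x + n) / Gamma (y + n)) atTop (𝓝 0) := by
  have hy : 0 < y := hx.trans hxy
  rw [← tendsto_add_atTop_iff_nat 1]
  have euler : ∀ᶠ n : ℕ in atTop, Gamma (x + (n + 1 : ℕ)) / Gamma (y + (n + 1 : ℕ)) =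
      Gamma x / Gamma y * (n : ℝ) ^ (x - y) * (GammaSeq y n / GammaSeq x n) := by
    filter_upwards [eventually_ne_atTop 0] with n hn
    have hn' : (0 : ℝ) < n := by exact_mod_cast Nat.pos_of_ne_zero hn
    have hsx := GammaSeq_pos hx hn
    have hsy := GammaSeq_pos hy hn
    have hX : Gamma (x + (n + 1 : ℕ)) = Gamma x * ((n : ℝ) ^ x * n !) / GammaSeq x n :=
      eq_div_of_mul_eq hsx.ne' (by rw [mul_comm, GammaSeq_mul_Gamma_add_nat_succ hx])
    have hY : Gamma (y + (n + 1 : ℕ)) = Gamma y * ((n : ℝ) ^ y * n !) / GammaSeq y n :=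
      eq_div_of_mul_eq hsy.ne' (by rw [mul_comm, GammaSeq_mul_Gamma_add_nat_succ hy])
    rw [hX, hY, rpow_sub hn']
    have : (0 : ℝ) < n ! := by positivity
    have := Gamma_pos_of_pos hx
    have := Gamma_pos_of_pos hy
    field_simp
  have hpow : Tendsto (fun n : ℕ => (n : ℝ) ^ (x - y)) atTop (𝓝 0) := by
    simpa [Function.comp_def] using
      (tendsto_rpow_neg_atTop (sub_pos.2 hxy)).comp tendsto_natCast_atTop_atTop
  have hlim := (tendsto_const_nhds (x := Gamma x / Gamma y)).mul hpow |>.mul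
    ((GammaSeq_tendsto_Gamma y).div (GammaSeq_tendsto_Gamma x) (Gamma_pos_of_pos hx).ne')
  rw [mul_zero, zero_mul] at hlim
  exact hlim.congr' (euler.mono fun n h => h.symm)

end Real

theorem gdpNewClusterProb_eq {a b : ℝ} (ha : 0 < a) (hb : 0 < b) {n : ℕ} (hn : n ≠ 0) :
    gdpNewClusterProb a b n =
      a * (Gamma (a + b) / Gamma b) * (n / (n + (b - 1))) * (Gamma (b + n) / Gamma (a + b + n)) /
        (1 - Gamma (a + b) / Gamma b * (Gamma (b + n) / Gamma (a + b + n))) := by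
  have hn' : (1 : ℝ) ≤ n := by exact_mod_cast Nat.one_le_iff_ne_zero.2 hn
  have hshift : Gamma (b + n) = (b + n - 1) * Gamma (b + n - 1) := by
    rw [← Gamma_add_one (by linarith), sub_add_cancel]
  have hGb := Gamma_pos_of_pos hb
  have hGabn := Gamma_pos_of_pos (show 0 < a + b + n by positivity)
  have : (0 : ℝ) < n + (b - 1) := by linarith
  rw [gdpNewClusterProb, hshift, ← div_div_div_cancel_right₀ (mul_pos hGb hGabn).ne']
  congr 1
  · field_simp
    ring
  · field_simp

theorem gdp_new_cluster_prob_tendsto_zero (a b : ℝ) (ha : 0 < a) (hb : 0 < b) :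
    Tendsto (fun n : ℕ => gdpNewClusterProb a b n) atTop (nhds 0) := by
  set c := Gamma (a + b) / Gamma b
  set r : ℕ → ℝ := fun n => Gamma (b + n) / Gamma (a + b + n)
  have hr : Tendsto r atTop (𝓝 0) :=
    tendsto_Gamma_add_nat_div_Gamma_add_nat hb (lt_add_of_pos_left b ha)
  have hnum : Tendsto (fun n : ℕ => a * c * (n / (n + (b - 1))) * r n) atTop (𝓝 0) := by
    simpa using (tendsto_const_nhds.mul (tendsto_natCast_div_add_atTop (b - 1))).mul hr
  have hden : Tendsto (fun n => 1 - c * r n) atTop (𝓝 1) := by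
    simpa using tendsto_const_nhds.sub (tendsto_const_nhds.mul hr)
  simpa using (hnum.div hden one_ne_zero).congr'
    ((eventually_ne_atTop 0).mono fun n hn => (gdpNewClusterProb_eq ha hb hn).symm)
end

section
/- Fix a,b > 0 with a > 1. Then Σ_{n=1}^∞ n·a·Γ(a+b)Γ(b+n-1)/(Γ(b)Γ(a+b+n) − Γ(a+b)Γ(b+n)) converges to a finite constant. -/
/-!
The ratios `Γ x / Γ (x + a - 1)` are positive and their successive differences are
`(a - 1) Γ x / Γ (x + a)`, so `∑ Γ (b + n) / Γ (b + n + a)` telescopes and converges for `a > 1`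
(no Stirling asymptotics needed). In particular `Γ (b + n) / Γ (b + n + a) → 0`, so after dividing
numerator and denominator of the summand by `Γ (a + b + n + 1)` the subtracted term of the
denominator vanishes in the limit, and the summand is `O(Γ (b + n) / Γ (b + n + a))`.
-/

open Real Filter

open Asymptotics Topology

lemma Gamma_div_Gamma_add_sub_succ {x c : ℝ} (hx : 0 < x) (hc : 0 < c) :
    Gamma x / Gamma (x + c) - Gamma (x + 1) / Gamma (x + 1 + c) =
      c * (Gamma x / Gamma (x + c + 1)) := by
  have hxc : 0 < x + c := by linarith
  have hΓ := (Gamma_pos_of_pos hxc).ne'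
  rw [show x + 1 + c = x + c + 1 by ring, Gamma_add_one hx.ne', Gamma_add_one hxc.ne']
  field_simp
  ring

lemma summable_Gamma_div_Gamma_add {a b : ℝ} (hb : 0 < b) (ha : 1 < a) :
    Summable fun n : ℕ => Gamma (b + n) / Gamma (b + n + a) := by
  set f : ℕ → ℝ := fun n => Gamma (b + n) / Gamma (b + n + (a - 1))
  have hf_nonneg (n : ℕ) : 0 ≤ f n := by
    have : 0 < b + n := by positivity
    exact div_nonneg (Gamma_pos_of_pos this).le (Gamma_pos_of_pos (by linarith)).le
  have htel (n : ℕ) : Gamma (b + n) / Gamma (b + n + a) = (f n - f (n + 1)) / (a - 1) := by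
    have key := Gamma_div_Gamma_add_sub_succ (by positivity : 0 < b + n) (sub_pos.2 ha)
    rw [show b + n + (a - 1) + 1 = b + n + a by ring] at key
    rw [eq_div_iff (by linarith), mul_comm, ← key]
    simp only [f, Nat.cast_succ, ← add_assoc]
  refine summable_of_sum_range_le (c := f 0 / (a - 1)) (fun n => ?_) fun N => ?_
  · exact div_nonneg (Gamma_pos_of_pos (by positivity)).le (Gamma_pos_of_pos (by positivity)).le
  · simp_rw [htel, ← Finset.sum_div, Finset.sum_range_sub']
    gcongr
    linarith [hf_nonneg N]

lemma gdpNewClusterProb_succ_eq {a b : ℝ} (hab : 0 < a + b) (n : ℕ) :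
    gdpNewClusterProb a b (n + 1) = Gamma (b + n) / Gamma (b + n + a) *
      (a * Gamma (a + b) * ((n + 1) / (b + n + a)) /
        (Gamma b - Gamma (a + b) * (Gamma (b + n + 1) / Gamma (b + n + 1 + a)))) := by
  have hs : 0 < b + n + a := by linarith [n.cast_nonneg (α := ℝ)]
  have hG := (Gamma_pos_of_pos hs).ne'
  unfold gdpNewClusterProb
  rw [show b + n + 1 + a = b + n + a + 1 by ring, Gamma_add_one hs.ne']
  push_cast
  rw [show b + (n + 1) - 1 = b + n by ring, show a + b + (n + 1) = b + n + a + 1 by ring,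
    Gamma_add_one hs.ne', show b + (n + 1) = b + n + 1 by ring]
  field_simp

lemma isBigO_gdpNewClusterProb_succ {a b : ℝ} (ha : 1 < a) (hb : 0 < b) :
    (fun n : ℕ => gdpNewClusterProb a b (n + 1)) =O[atTop]
      fun n : ℕ => Gamma (b + n) / Gamma (b + n + a) := by
  have hratio := (summable_Gamma_div_Gamma_add hb ha).tendsto_atTop_zero
  have hratio_succ : Tendsto (fun n : ℕ => Gamma (b + n + 1) / Gamma (b + n + 1 + a))
      atTop (𝓝 0) := by
    simpa only [Nat.cast_succ, ← add_assoc] using (tendsto_add_atTop_iff_nat 1).2 hratio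
  have hfrac : Tendsto (fun n : ℕ => ((n : ℝ) + 1) / (b + n + a)) atTop (𝓝 1) := by
    convert (tendsto_add_atTop_iff_nat 1).2 (tendsto_natCast_div_add_atTop (a + b - 1))
      using 2 with n
    push_cast
    ring_nf
  have hfactor := ((tendsto_const_nhds (x := a * Gamma (a + b))).mul hfrac).div
    ((tendsto_const_nhds (x := Gamma b)).sub
      ((tendsto_const_nhds (x := Gamma (a + b))).mul hratio_succ))
    (by simpa using (Gamma_pos_of_pos hb).ne')
  simp_rw [gdpNewClusterProb_succ_eq (add_pos (one_pos.trans ha) hb)]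
  simpa using (isBigO_refl _ _).mul (hfactor.isBigO_one ℝ)

theorem gdp_expected_clusters_bounded_general (a b : ℝ) (hb : 0 < b) (ha1 : 1 < a) :
    ∃ S : ℝ, Tendsto (fun N : ℕ => ∑ n ∈ Finset.range N, gdpNewClusterProb a b (n + 1))
      atTop (nhds S) :=
  ⟨_, (summable_of_isBigO_nat (summable_Gamma_div_Gamma_add hb ha1)
    (isBigO_gdpNewClusterProb_succ ha1 hb)).hasSum.tendsto_sum_nat⟩

theorem gdp_expected_clusters_bounded (a b : ℝ) (ha : 0 < a) (hb : 0 < b) (ha1 : 1 < a) :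
    ∃ S : ℝ, Tendsto (fun N : ℕ => ∑ n ∈ Finset.range N, gdpNewClusterProb a b (n + 1))
      atTop (nhds S) :=
  gdp_expected_clusters_bounded_general a b hb ha1
end

section
/- Fix a,b > 0. Then n^a · [n·a·Γ(a+b)Γ(b+n-1)/(Γ(b)Γ(a+b+n) − Γ(a+b)Γ(b+n))] converges to a positive finite limit as n → ∞. -/
/-!
Euler's limit formula gives `Γ(x + n) ~ n! n^(x-1)`, hence `Γ(a + b + n) / Γ(b + n) ~ n^a`.
Dividing numerator and denominator of `n^a · gdpNewClusterProb a b n` by `n^a Γ(b + n)`, and using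
`Γ(b + n) = (b + n - 1) Γ(b + n - 1)`, the numerator tends to `a Γ(a + b)` and the denominator to
`Γ(b)`, so the limit is `a Γ(a + b) / Γ(b) > 0`.
-/

open Real Filter

open Asymptotics Topology Nat

theorem Real.Gamma_mul_prod_range_add {x : ℝ} (hx : 0 < x) (n : ℕ) :
    Gamma x * ∏ j ∈ Finset.range n, (x + j) = Gamma (x + n) := by
  induction n with
  | zero => simp
  | succ n ih =>
    rw [Finset.prod_range_succ, ← mul_assoc, ih, Nat.cast_succ, ← add_assoc,
      Gamma_add_one (by positivity), mul_comm]

theorem Real.GammaSeq_div_Gamma {x : ℝ} (hx : 0 < x) (n : ℕ) :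
    GammaSeq x n / Gamma x = n ! * (n : ℝ) ^ x / Gamma (x + n + 1) := by
  rw [GammaSeq, div_div, mul_comm _ (Gamma x), Gamma_mul_prod_range_add hx, mul_comm (_ ^ x)]
  push_cast
  ring_nf

theorem Real.isEquivalent_Gamma_add_nat {x : ℝ} (hx : 0 < x) :
    (fun n : ℕ => Gamma (x + n)) ~[atTop] fun n => n ! * (n : ℝ) ^ (x - 1) := by
  refine (isEquivalent_of_tendsto_one ?_).symm
  have hseq : Tendsto (fun n : ℕ => GammaSeq x n / Gamma x) atTop (𝓝 1) := by
    simpa [(Gamma_pos_of_pos hx).ne'] using (GammaSeq_tendsto_Gamma x).div_const (Gamma x)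
  have hlin : Tendsto (fun n : ℕ => ((n : ℝ) / (n + x))⁻¹) atTop (𝓝 1) := by
    simpa using (tendsto_natCast_div_add_atTop x).inv₀ one_ne_zero
  refine (mul_one (1 : ℝ) ▸ hseq.mul hlin).congr' ?_
  filter_upwards [eventually_ne_atTop 0] with n hn
  have hn' : (0 : ℝ) < n := by positivity
  rw [Pi.div_apply, GammaSeq_div_Gamma hx, Gamma_add_one (by positivity),
    rpow_sub_one hn'.ne']
  field_simp
  ring

theorem Real.isEquivalent_Gamma_add_nat_div_Gamma_add_nat {x y : ℝ} (hx : 0 < x) (hy : 0 < y) :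
    (fun n : ℕ => Gamma (x + n) / Gamma (y + n)) ~[atTop] fun n => (n : ℝ) ^ (x - y) := by
  refine ((isEquivalent_Gamma_add_nat hx).div (isEquivalent_Gamma_add_nat hy)).congr_right ?_
  filter_upwards [eventually_ne_atTop 0] with n hn
  have hn' : (0 : ℝ) < n := by positivity
  rw [Pi.div_apply, mul_div_mul_left _ _ (by positivity), ← rpow_sub hn']
  ring_nf

theorem rpow_mul_gdpNewClusterProb_eq (a : ℝ) {b : ℝ} (hb : 0 < b) {n : ℕ} (hn : n ≠ 0) :
    (n : ℝ) ^ a * gdpNewClusterProb a b n =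
      a * Gamma (a + b) * (n / (n + (b - 1))) /
        (Gamma b * (Gamma (a + b + n) / Gamma (b + n) / n ^ a) - Gamma (a + b) * n ^ (-a)) := by
  have hn' : (0 : ℝ) < n := by positivity
  have hbn : 0 < b + n - 1 := by
    have : (1 : ℝ) ≤ n := by exact_mod_cast Nat.one_le_iff_ne_zero.mpr hn
    linarith
  have hΓ : Gamma (b + n) = (b + n - 1) * Gamma (b + n - 1) := by
    rw [← Gamma_add_one hbn.ne', sub_add_cancel]
  rw [gdpNewClusterProb, show (n : ℝ) + (b - 1) = b + n - 1 by ring, hΓ, rpow_neg hn'.le]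
  field_simp

theorem gdp_new_cluster_prob_power_law (a b : ℝ) (ha : 0 < a) (hb : 0 < b) :
    ∃ L : ℝ, 0 < L ∧
      Tendsto (fun n : ℕ => (n : ℝ) ^ a * gdpNewClusterProb a b n) atTop (nhds L) := by
  have hΓb : 0 < Gamma b := Gamma_pos_of_pos hb
  have hΓab : 0 < Gamma (a + b) := Gamma_pos_of_pos (add_pos ha hb)
  refine ⟨a * Gamma (a + b) / Gamma b, by positivity, ?_⟩
  have hratio : Tendsto (fun n : ℕ => Gamma (a + b + n) / Gamma (b + n) / n ^ a) atTop (𝓝 1) := by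
    have h := isEquivalent_Gamma_add_nat_div_Gamma_add_nat (add_pos ha hb) hb
    rwa [add_sub_cancel_right, isEquivalent_iff_tendsto_one
      ((eventually_ne_atTop 0).mono fun n hn => by positivity)] at h
  have hdecay : Tendsto (fun n : ℕ => (n : ℝ) ^ (-a)) atTop (𝓝 0) :=
    (tendsto_rpow_neg_atTop ha).comp tendsto_natCast_atTop_atTop
  have hlim := ((tendsto_natCast_div_add_atTop (b - 1)).const_mul (a * Gamma (a + b))).div
    ((hratio.const_mul (Gamma b)).sub (hdecay.const_mul (Gamma (a + b))))
    (by simpa using hΓb.ne')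
  rw [mul_one, mul_one, mul_zero, sub_zero] at hlim
  refine hlim.congr' ?_
  filter_upwards [eventually_ne_atTop 0] with n hn
  exact (rpow_mul_gdpNewClusterProb_eq a hb hn).symm
end

section
/- Let (u_k)_{k≥1} be independent with u_k ∼ Beta(1−α, β+kα) for 0 ≤ α < 1 and β > −α, and let w_k = u_k·Π_{s<k}(1−u_s). Then E[Π_{k=1}^n (1−u_k)] = Π_{k=1}^n (β+kα)/(1+β+(k−1)α), and this product tends to 0 as n → ∞, so Σ_k w_k = 1 almost surely. -/
open Real MeasureTheory ProbabilityTheory Filter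

/-- Density of the Beta(a,b) distribution on (0,1). -/
noncomputable def betaDensity (a b x : ℝ) : ℝ :=
  x ^ (a - 1) * (1 - x) ^ (b - 1) / (Real.Gamma a * Real.Gamma b / Real.Gamma (a + b))

/-- The Beta(a,b) probability measure on ℝ. -/
noncomputable def betaMeasure (a b : ℝ) : Measure ℝ :=
  (volume.restrict (Set.Ioo 0 1)).withDensity fun x => ENNReal.ofReal (betaDensity a b x)

/-!
Each factor `1 - u_k` has mean `(β + (k+1)α) / (1 + β + kα)` because
`B(a, b+1) = B(a, b) · b/(a+b)`, and independence turns the mean of the product into the product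
of the means. That product is `∏ (1 - c_k)` with `c_k = (1-α)/(1 + β + kα)` of harmonic size, so
it tends to `0`. The partial products of the `1 - u_k` are antitone and nonnegative with
expectations tending to `0`, hence tend to `0` almost surely; and the partial sums of the weights
telescope to `1 - ∏_{k<n} (1 - u_k)`.
-/

open Finset Topology

lemma integral_rpow_mul_one_sub_rpow {a b : ℝ} (ha : 0 < a) (hb : 0 < b) :
    ∫ x in Set.Ioo (0 : ℝ) 1, x ^ (a - 1) * (1 - x) ^ (b - 1) = ProbabilityTheory.beta a b := by
  have h : Complex.betaIntegral a b =
      ↑(∫ x in Set.Ioo (0 : ℝ) 1, x ^ (a - 1) * (1 - x) ^ (b - 1)) := by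
    rw [Complex.betaIntegral, intervalIntegral.integral_of_le zero_le_one,
      integral_Ioc_eq_integral_Ioo, ← integral_complex_ofReal]
    refine setIntegral_congr_fun measurableSet_Ioo fun x hx => ?_
    push_cast [Complex.ofReal_cpow hx.1.le, Complex.ofReal_cpow (sub_nonneg.2 hx.2.le)]
    rfl
  rw [beta_eq_betaIntegralReal a b ha hb, h, Complex.ofReal_re]

lemma beta_add_one_right {a b : ℝ} (ha : 0 < a) (hb : 0 < b) :
    ProbabilityTheory.beta a (b + 1) = ProbabilityTheory.beta a b * (b / (a + b)) := by
  have hab : a + b ≠ 0 := by positivity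
  rw [ProbabilityTheory.beta, ProbabilityTheory.beta, ← add_assoc, Real.Gamma_add_one hb.ne',
    Real.Gamma_add_one hab]
  field_simp

lemma ae_mem_Ioo_betaMeasure (a b : ℝ) : ∀ᵐ x ∂_root_.betaMeasure a b, x ∈ Set.Ioo (0 : ℝ) 1 :=
  (withDensity_absolutelyContinuous _ _).ae_le (ae_restrict_mem measurableSet_Ioo)

lemma integral_one_sub_betaMeasure {a b : ℝ} (ha : 0 < a) (hb : 0 < b) :
    ∫ x, (1 - x) ∂_root_.betaMeasure a b = b / (a + b) := by
  have hB : 0 < ProbabilityTheory.beta a b := beta_pos ha hb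
  rw [_root_.betaMeasure, integral_withDensity_eq_integral_toReal_smul
    (by unfold betaDensity; fun_prop) (ae_of_all _ fun _ => ENNReal.ofReal_lt_top)]
  calc ∫ x in Set.Ioo (0 : ℝ) 1, (ENNReal.ofReal (betaDensity a b x)).toReal • (1 - x)
      = ∫ x in Set.Ioo (0 : ℝ) 1,
          x ^ (a - 1) * (1 - x) ^ (b + 1 - 1) / ProbabilityTheory.beta a b := by
        refine setIntegral_congr_fun measurableSet_Ioo fun x hx => ?_
        have hx1 : 0 < 1 - x := sub_pos.2 hx.2
        have hd : 0 ≤ betaDensity a b x := by unfold betaDensity; have := hx.1; positivity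
        rw [ENNReal.toReal_ofReal hd, smul_eq_mul, add_sub_cancel_right, betaDensity,
          Real.rpow_sub_one hx1.ne' b]
        unfold ProbabilityTheory.beta
        field_simp
    _ = b / (a + b) := by
        rw [integral_div, integral_rpow_mul_one_sub_rpow ha (by positivity),
          beta_add_one_right ha hb]
        field_simp

lemma ProbabilityTheory.iIndepFun.integral_finset_prod {Ω ι : Type*} [MeasurableSpace Ω]
    {μ : Measure Ω} {X : ι → Ω → ℝ} (hX : iIndepFun X μ) (mX : ∀ i, AEStronglyMeasurable (X i) μ)
    (s : Finset ι) :
    ∫ ω, ∏ i ∈ s, X i ω ∂μ = ∏ i ∈ s, ∫ ω, X i ω ∂μ := by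
  have h := (hX.precomp Subtype.val_injective).integral_fun_prod_eq_prod_integral (ι := s)
    fun i => mX i
  rw [prod_coe_sort s fun i => ∫ ω, X i ω ∂μ] at h
  rw [← h]
  congr with ω
  exact (prod_coe_sort s fun i => X i ω).symm

section OneSubProducts

variable {u : ℕ → ℝ}

lemma sum_range_mul_prod_one_sub {R : Type*} [CommRing R] (u : ℕ → R) (n : ℕ) :
    ∑ k ∈ range n, u k * ∏ s ∈ range k, (1 - u s) = 1 - ∏ k ∈ range n, (1 - u k) := by
  induction n with
  | zero => simp
  | succ n ih => rw [sum_range_succ, ih, prod_range_succ]; ring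

lemma prod_range_one_sub_mem_Icc (hu : ∀ k, u k ∈ Set.Icc 0 1) (n : ℕ) :
    ∏ k ∈ range n, (1 - u k) ∈ Set.Icc 0 1 :=
  ⟨prod_nonneg fun k _ => sub_nonneg.2 (hu k).2,
    prod_le_one (fun k _ => sub_nonneg.2 (hu k).2) fun k _ => sub_le_self _ (hu k).1⟩

lemma antitone_prod_range_one_sub (hu : ∀ k, u k ∈ Set.Icc 0 1) :
    Antitone fun n => ∏ k ∈ range n, (1 - u k) :=
  antitone_nat_of_succ_le fun n => by
    rw [prod_range_succ]
    exact mul_le_of_le_one_right (prod_range_one_sub_mem_Icc hu n).1 (sub_le_self _ (hu n).1)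

lemma tsum_mul_prod_one_sub_eq_one (hu : ∀ k, u k ∈ Set.Icc 0 1)
    (h : Tendsto (fun n => ∏ k ∈ range n, (1 - u k)) atTop (𝓝 0)) :
    ∑' k, u k * ∏ s ∈ range k, (1 - u s) = 1 := by
  have hterm k : 0 ≤ u k * ∏ s ∈ range k, (1 - u s) :=
    mul_nonneg (hu k).1 (prod_range_one_sub_mem_Icc hu k).1
  refine ((hasSum_iff_tendsto_nat_of_nonneg hterm 1).2 ?_).tsum_eq
  simpa [sum_range_mul_prod_one_sub] using h.const_sub 1

lemma tendsto_prod_range_one_sub_zero (hu : ∀ k, u k ≤ 1)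
    (hsum : Tendsto (fun n => ∑ k ∈ range n, u k) atTop atTop) :
    Tendsto (fun n => ∏ k ∈ range n, (1 - u k)) atTop (𝓝 0) := by
  have hle n : ∏ k ∈ range n, (1 - u k) ≤ exp (-∑ k ∈ range n, u k) := by
    rw [← sum_neg_distrib, exp_sum]
    exact prod_le_prod (fun k _ => sub_nonneg.2 (hu k))
      fun k _ => by linarith [add_one_le_exp (-u k)]
  exact squeeze_zero (fun n => prod_nonneg fun k _ => sub_nonneg.2 (hu k)) hle
    (tendsto_exp_atBot.comp (tendsto_neg_atTop_atBot.comp hsum))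

end OneSubProducts

lemma tendsto_prod_range_div_zero {α β : ℝ} (hα : 0 ≤ α) (hα1 : α < 1) (hβ : -α < β) :
    Tendsto (fun n : ℕ => ∏ k ∈ range n, (β + (k + 1) * α) / (1 + β + k * α)) atTop (𝓝 0) := by
  have hβ1 : 0 < 1 + β := by linarith
  have hden (k : ℕ) : 0 < 1 + β + k * α := by positivity
  have hratio (k : ℕ) :
      (β + (k + 1) * α) / (1 + β + k * α) = 1 - (1 - α) / (1 + β + k * α) := by
    field_simp; ring
  simp only [hratio]
  refine tendsto_prod_range_one_sub_zero (fun k => ?_) ?_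
  · rw [div_le_one (hden k)]
    nlinarith [mul_nonneg (Nat.cast_nonneg (α := ℝ) k) hα]
  · -- comparison with the harmonic series, from `1 + β + kα ≤ (1 + β + α)(k + 1)`
    have hε : 0 < (1 - α) / (1 + β + α) := div_pos (by linarith) (by linarith)
    refine tendsto_atTop_mono (fun n => ?_)
      (tendsto_sum_range_one_div_nat_succ_atTop.const_mul_atTop hε)
    rw [mul_sum]
    refine sum_le_sum fun k _ => ?_
    rw [div_mul_div_comm, mul_one]
    apply div_le_div_of_nonneg_left (by linarith) (hden k)
    nlinarith [mul_nonneg (Nat.cast_nonneg (α := ℝ) k) hα,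
      mul_nonneg (Nat.cast_nonneg (α := ℝ) k) hβ1.le]

theorem py_stick_breaking_sums_to_one {Ω : Type*} [MeasurableSpace Ω]
    (μ : Measure Ω) [IsProbabilityMeasure μ]
    (α β : ℝ) (hα : 0 ≤ α) (hα1 : α < 1) (hβ : -α < β) (u : ℕ → Ω → ℝ)
    (hmeas : ∀ k, Measurable (u k))
    (hlaw : ∀ k : ℕ, μ.map (u k) = _root_.betaMeasure (1 - α) (β + (k + 1) * α))
    (hindep : iIndepFun u μ) :
    (∀ n : ℕ, ∫ ω, ∏ k ∈ Finset.range n, (1 - u k ω) ∂μ =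
        ∏ k ∈ Finset.range n, (β + (k + 1) * α) / (1 + β + k * α)) ∧
    Tendsto (fun n : ℕ => ∏ k ∈ Finset.range n, (β + (k + 1) * α) / (1 + β + k * α))
      atTop (nhds 0) ∧
    ∀ᵐ ω ∂μ, (∑' k : ℕ, u k ω * ∏ s ∈ Finset.range k, (1 - u s ω)) = 1 := by
  have hmem : ∀ᵐ ω ∂μ, ∀ k, u k ω ∈ Set.Icc 0 1 := ae_all_iff.2 fun k =>
    (ae_of_ae_map (hmeas k).aemeasurable (hlaw k ▸ ae_mem_Ioo_betaMeasure _ _)).mono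
      fun _ h => Set.Ioo_subset_Icc_self h
  have hfactor (k : ℕ) : ∫ ω, (1 - u k ω) ∂μ = (β + (k + 1) * α) / (1 + β + k * α) := by
    have hb : 0 < β + (k + 1) * α := by nlinarith [mul_nonneg (Nat.cast_nonneg (α := ℝ) k) hα]
    rw [← integral_map (hmeas k).aemeasurable (by fun_prop), hlaw k,
      integral_one_sub_betaMeasure (by linarith) hb]
    ring_nf
  have hmean (n : ℕ) : ∫ ω, ∏ k ∈ range n, (1 - u k ω) ∂μ =
      ∏ k ∈ range n, (β + (k + 1) * α) / (1 + β + k * α) := by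
    exact ((hindep.comp (fun _ x => 1 - x) fun _ => by fun_prop).integral_finset_prod
      (fun k => by fun_prop) _).trans (prod_congr rfl fun k _ => hfactor k)
  have hlim := tendsto_prod_range_div_zero hα hα1 hβ
  refine ⟨hmean, hlim, ?_⟩
  have hprod : ∀ᵐ ω ∂μ, Tendsto (fun n => ∏ k ∈ range n, (1 - u k ω)) atTop (𝓝 0) := by
    refine tendsto_of_integral_tendsto_of_antitone (F := 0) (fun n => ?_) (integrable_zero _ _ _)
      (by simpa [hmean] using hlim) (hmem.mono fun _ => antitone_prod_range_one_sub)
      (hmem.mono fun _ h n => (prod_range_one_sub_mem_Icc h n).1)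
    refine Integrable.of_bound (by fun_prop) 1 (hmem.mono fun _ h => ?_)
    obtain ⟨h0, h1⟩ := prod_range_one_sub_mem_Icc h n
    rwa [norm_of_nonneg h0]
  filter_upwards [hmem, hprod] with ω hω hω' using tsum_mul_prod_one_sub_eq_one hω hω'
end

section
/- Let u ∼ Beta(a,b) with a,b > 0 and define p_i = i·E[u(1−u)^{i−1}]/(1 − E[(1−u)^i]) for i ≥ 1. Then p_1 = 1 and 0 < p_i ≤ 1 for all i ≥ 1. -/
open Real MeasureTheory

/-- The probability that the i-th draw from a GDP(a,b,G₀) starts a new cluster,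
expressed via Beta(a,b) moments. -/
noncomputable def gdpNewClusterProbMoment (a b : ℝ) (i : ℕ) : ℝ :=
  (i : ℝ) * (∫ x in Set.Ioo (0:ℝ) 1, (x * (1 - x) ^ (i - 1)) * betaDensity a b x) /
    (1 - ∫ x in Set.Ioo (0:ℝ) 1, (1 - x) ^ i * betaDensity a b x)

/-! With `y = 1 - u`, the identity `1 - y ^ i = (1 - y) * (1 + y + ⋯ + y ^ (i - 1))` gives
`i * u * (1 - u) ^ (i - 1) ≤ 1 - (1 - u) ^ i` pointwise on `[0, 1]`; integrating against the Beta
density, which on `(0, 1)` is Mathlib's `betaPDFReal` and hence a positive probability density,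
turns this into `0 < i * E[u (1 - u) ^ (i - 1)] ≤ 1 - E[(1 - u) ^ i]`. For `i = 1` the two sides
coincide. -/

open Set ProbabilityTheory

lemma nat_mul_sub_mul_pow_pred_le_one_sub_pow {y : ℝ} (hy₀ : 0 ≤ y) (hy₁ : y ≤ 1) (i : ℕ) :
    i * ((1 - y) * y ^ (i - 1)) ≤ 1 - y ^ i := by
  have hgeom : (i : ℝ) * y ^ (i - 1) ≤ ∑ j ∈ Finset.range i, y ^ j := by
    calc (i : ℝ) * y ^ (i - 1) = ∑ _j ∈ Finset.range i, y ^ (i - 1) := by simp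
      _ ≤ ∑ j ∈ Finset.range i, y ^ j :=
        Finset.sum_le_sum fun j hj => pow_le_pow_of_le_one hy₀ hy₁ (by grind)
  calc (i : ℝ) * ((1 - y) * y ^ (i - 1)) = (1 - y) * (i * y ^ (i - 1)) := by ring
    _ ≤ (1 - y) * ∑ j ∈ Finset.range i, y ^ j := by gcongr
    _ = 1 - y ^ i := mul_neg_geom_sum y i

lemma setIntegral_Ioo_pos {f : ℝ → ℝ} {a b : ℝ} (hab : a < b) (hf : IntegrableOn f (Ioo a b))
    (hpos : ∀ x ∈ Ioo a b, 0 < f x) : 0 < ∫ x in Ioo a b, f x := by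
  rw [← integral_Ioc_eq_integral_Ioo, ← intervalIntegral.integral_of_le hab.le]
  refine intervalIntegral.intervalIntegral_pos_of_pos_on ?_ hpos hab
  exact (intervalIntegrable_iff_integrableOn_Ioo_of_le hab.le).2 hf

section UnitIntervalDensity

variable {f : ℝ → ℝ}

lemma MeasureTheory.IntegrableOn.continuous_mul_Ioo {a b : ℝ} (hf : IntegrableOn f (Ioo a b))
    {g : ℝ → ℝ} (hg : Continuous g) : IntegrableOn (fun x => g x * f x) (Ioo a b) :=
  hf.continuousOn_mul_of_subset hg.continuousOn isCompact_Icc measurableSet_Ioo Ioo_subset_Icc_self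

lemma one_sub_setIntegral_one_sub_pow_mul (hf : IntegrableOn f (Ioo 0 1))
    (hf_one : ∫ x in Ioo 0 1, f x = 1) (i : ℕ) :
    1 - ∫ x in Ioo 0 1, (1 - x) ^ i * f x = ∫ x in Ioo 0 1, (1 - (1 - x) ^ i) * f x := by
  simp_rw [sub_mul, one_mul]
  rw [integral_sub hf (hf.continuous_mul_Ioo (by fun_prop)), hf_one]

lemma setIntegral_mul_one_sub_pow_mul_pos (hf : IntegrableOn f (Ioo 0 1))
    (hf_pos : ∀ x ∈ Ioo 0 1, 0 < f x) (n : ℕ) :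
    0 < ∫ x in Ioo 0 1, x * (1 - x) ^ n * f x :=
  setIntegral_Ioo_pos one_pos (hf.continuous_mul_Ioo (by fun_prop)) fun x hx =>
    mul_pos (mul_pos hx.1 (pow_pos (sub_pos.2 hx.2) n)) (hf_pos x hx)

lemma nat_mul_setIntegral_mul_one_sub_pow_pred_le (hf : IntegrableOn f (Ioo 0 1))
    (hf_nonneg : ∀ x ∈ Ioo 0 1, 0 ≤ f x) (hf_one : ∫ x in Ioo 0 1, f x = 1) (i : ℕ) :
    i * ∫ x in Ioo 0 1, x * (1 - x) ^ (i - 1) * f x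
      ≤ 1 - ∫ x in Ioo 0 1, (1 - x) ^ i * f x := by
  rw [one_sub_setIntegral_one_sub_pow_mul hf hf_one, ← integral_const_mul]
  refine setIntegral_mono_on ((hf.continuous_mul_Ioo (by fun_prop)).const_mul _)
    (hf.continuous_mul_Ioo (by fun_prop)) measurableSet_Ioo fun x hx => ?_
  have key := nat_mul_sub_mul_pow_pred_le_one_sub_pow (y := 1 - x) (by linarith [hx.2])
    (by linarith [hx.1]) i
  rw [sub_sub_cancel] at key
  rw [← mul_assoc]
  exact mul_le_mul_of_nonneg_right key (hf_nonneg x hx)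

end UnitIntervalDensity

section Beta

variable {a b : ℝ}

lemma betaDensity_eq_betaPDFReal {x : ℝ} (hx : x ∈ Ioo 0 1) :
    betaDensity a b x = betaPDFReal a b x := by
  rw [betaPDFReal, if_pos (mem_Ioo.1 hx), betaDensity, ProbabilityTheory.beta]
  ring

lemma betaPDFReal_eq_zero_of_notMem {x : ℝ} (hx : x ∉ Ioo 0 1) : betaPDFReal a b x = 0 := by
  rw [betaPDFReal, if_neg (mt mem_Ioo.2 hx)]

lemma betaPDFReal_nonneg (ha : 0 < a) (hb : 0 < b) (x : ℝ) : 0 ≤ betaPDFReal a b x := by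
  by_cases hx : x ∈ Ioo 0 1
  · exact (betaPDFReal_pos hx.1 hx.2 ha hb).le
  · rw [betaPDFReal_eq_zero_of_notMem hx]

lemma integral_betaPDFReal (ha : 0 < a) (hb : 0 < b) : ∫ x, betaPDFReal a b x = 1 := by
  rw [integral_eq_lintegral_of_nonneg_ae (ae_of_all _ (betaPDFReal_nonneg ha hb))
    (measurable_betaPDFReal a b).aestronglyMeasurable]
  change (∫⁻ x, betaPDF a b x).toReal = 1
  rw [lintegral_betaPDF_eq_one ha hb, ENNReal.toReal_one]

lemma setIntegral_Ioo_betaPDFReal (ha : 0 < a) (hb : 0 < b) :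
    ∫ x in Ioo 0 1, betaPDFReal a b x = 1 := by
  rw [setIntegral_eq_integral_of_forall_compl_eq_zero fun _ => betaPDFReal_eq_zero_of_notMem,
    integral_betaPDFReal ha hb]

lemma integrable_betaPDFReal (ha : 0 < a) (hb : 0 < b) : Integrable (betaPDFReal a b) :=
  Integrable.of_integral_ne_zero (by rw [integral_betaPDFReal ha hb]; exact one_ne_zero)

lemma setIntegral_mul_betaDensity (g : ℝ → ℝ) :
    ∫ x in Ioo 0 1, g x * betaDensity a b x = ∫ x in Ioo 0 1, g x * betaPDFReal a b x :=
  setIntegral_congr_fun measurableSet_Ioo fun _ hx => by rw [betaDensity_eq_betaPDFReal hx]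

end Beta

theorem gdp_new_cluster_prob_bounds (a b : ℝ) (ha : 0 < a) (hb : 0 < b) :
    gdpNewClusterProbMoment a b 1 = 1 ∧
      ∀ i : ℕ, 1 ≤ i → 0 < gdpNewClusterProbMoment a b i ∧ gdpNewClusterProbMoment a b i ≤ 1 := by
  have hf := (integrable_betaPDFReal ha hb).integrableOn (s := Ioo 0 1)
  have hf_pos : ∀ x ∈ Ioo (0 : ℝ) 1, 0 < betaPDFReal a b x := fun x hx =>
    betaPDFReal_pos hx.1 hx.2 ha hb
  have hf_one := setIntegral_Ioo_betaPDFReal ha hb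
  simp only [gdpNewClusterProbMoment, setIntegral_mul_betaDensity]
  refine ⟨?_, fun i hi => ?_⟩
  · rw [one_sub_setIntegral_one_sub_pow_mul hf hf_one, Nat.cast_one, one_mul]
    have hD : ∫ x in Ioo 0 1, (1 - (1 - x) ^ 1) * betaPDFReal a b x
        = ∫ x in Ioo 0 1, x * (1 - x) ^ (1 - 1) * betaPDFReal a b x := by simp
    rw [hD, div_self (setIntegral_mul_one_sub_pow_mul_pos hf hf_pos _).ne']
  · have hN := mul_pos (Nat.cast_pos.2 hi) (setIntegral_mul_one_sub_pow_mul_pos hf hf_pos (i - 1))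
    have hle := nat_mul_setIntegral_mul_one_sub_pow_pred_le hf (fun x hx => (hf_pos x hx).le)
      hf_one i
    have hD := hN.trans_le hle
    exact ⟨div_pos hN hD, (div_le_one hD).2 hle⟩
end
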